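/- arXiv:2402.07795 — 7 statements merged into one kernel-verified Lean document; each statement's English description precedes it below -/
import Mathlib

section
/- For every n ≥ 1, the integral ∫_{-∞}^{∞} x^n / sinh(x) dx equals (1-(-1)^n)(2^{n+1}-1)/2^n · n! · ζ(n+1), where ζ is the Riemann zeta function. In particular the integral vanishes for even n. -/
/-!
For `t > 0` the geometric series gives `1 / sinh t = 2 ∑ₖ e^{-(2k+1)t}`. Integrating term by term
against `t^{s-1}`, the Mellin transform of `1 / sinh` is `2 Γ(s) ∑ₖ (2k+1)^{-s}`, and the odd part of
the zeta series is `(1 - 2^{-s}) ζ(s)`. For odd `n` the integrand `x^n / sinh x` is even, so the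
integral over `ℝ` is twice this Mellin transform at `s = n + 1`; for even `n` it is odd and the
integral vanishes.
-/

open MeasureTheory Real Set

theorem Function.Odd.integral_eq_zero {G E : Type*} [MeasurableSpace G] [AddGroup G]
    [MeasurableNeg G] [NormedAddCommGroup E] [NormedSpace ℝ E] {μ : Measure G} [μ.IsNegInvariant]
    {f : G → E} (hf : f.Odd) : ∫ x, f x ∂μ = 0 := by
  have := IsAddTorsionFree.of_isTorsionFree ℝ E
  have h := integral_neg_eq_self f μ
  rwa [funext hf, integral_neg, neg_eq_self] at h

theorem Function.Even.integral_eq_two_mul_integral_Ioi {f : ℝ → ℝ} (hf : f.Even) :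
    ∫ x, f x = 2 * ∫ x in Ioi 0, f x := by
  rw [← integral_comp_abs]
  congr 1 with x
  rcases abs_choice x with h | h <;> simp [h, hf.eq]

theorem mellin_ofReal_natCast_add_one (f : ℝ → ℝ) (n : ℕ) :
    mellin (fun t => (f t : ℂ)) (n + 1) = ↑(∫ t in Ioi 0, t ^ n * f t) := by
  rw [mellin, ← integral_complex_ofReal]
  refine setIntegral_congr_fun measurableSet_Ioi fun t _ => ?_
  simp [Complex.cpow_natCast]

theorem hasSum_inv_sinh {t : ℝ} (ht : 0 < t) :
    HasSum (fun k : ℕ => 2 * exp (-(2 * k + 1) * t)) (sinh t)⁻¹ := by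
  have hq : exp (-t) < 1 := exp_lt_one_iff.2 (by linarith)
  have h := (hasSum_geometric_of_lt_one (sq_nonneg _)
    (pow_lt_one₀ (exp_nonneg _) hq two_ne_zero)).mul_left (2 * exp (-t))
  have hsum : 2 * exp (-t) * (1 - exp (-t) ^ 2)⁻¹ = (sinh t)⁻¹ := by
    have hne : 1 - exp (-t) ^ 2 ≠ 0 := by nlinarith [exp_pos (-t)]
    have hsinh : exp t - exp (-t) ≠ 0 := by linarith [exp_lt_exp.2 (by linarith : -t < t)]
    have hinv : exp t * exp (-t) = 1 := by rw [← exp_add, add_neg_cancel, exp_zero]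
    rw [sinh_eq]
    field_simp
    linear_combination hinv
  rw [hsum] at h
  refine h.congr_fun fun k => ?_
  rw [← pow_mul, ← exp_nat_mul, mul_assoc, ← exp_add]
  push_cast
  ring_nf

theorem tsum_one_div_two_mul_add_one_cpow {s : ℂ} (hs : 1 < s.re) :
    ∑' k : ℕ, 1 / (2 * k + 1 : ℂ) ^ s = (1 - (2 : ℂ) ^ (-s)) * riemannZeta s := by
  have hζ := Complex.summable_one_div_nat_cpow.2 hs
  have hsplit := tsum_even_add_odd (f := fun m : ℕ => 1 / (m : ℂ) ^ s)
    (hζ.comp_injective (mul_right_injective₀ (two_ne_zero : (2 : ℕ) ≠ 0)))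
    (hζ.comp_injective fun a b (h : 2 * a + 1 = 2 * b + 1) => by omega)
  have heven (k : ℕ) : 1 / ((2 * k : ℕ) : ℂ) ^ s = 2 ^ (-s) * (1 / (k : ℂ) ^ s) := by
    rw [Nat.cast_mul, Complex.natCast_mul_natCast_cpow, Complex.cpow_neg, Nat.cast_ofNat]
    ring
  rw [tsum_congr heven, tsum_mul_left, ← zeta_eq_tsum_one_div_nat_cpow hs] at hsplit
  push_cast at hsplit
  linear_combination hsplit

theorem mellin_inv_sinh {s : ℂ} (hs : 1 < s.re) :
    mellin (fun t : ℝ => (((sinh t)⁻¹ : ℝ) : ℂ)) s =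
      2 * (1 - (2 : ℂ) ^ (-s)) * Complex.Gamma s * riemannZeta s := by
  have hsum : Summable fun k : ℕ => ‖(2 : ℂ)‖ / (2 * k + 1 : ℝ) ^ s.re := by
    have := ((Real.summable_one_div_nat_rpow.2 hs).comp_injective
      (fun a b (h : 2 * a + 1 = 2 * b + 1) => by omega)).mul_left 2
    refine this.congr fun k => ?_
    simp [div_eq_mul_inv]
  have hF (t : ℝ) (ht : t ∈ Ioi 0) :
      HasSum (fun k : ℕ => (2 : ℂ) * ↑(exp (-(2 * k + 1) * t))) ↑(sinh t)⁻¹ := by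
    have := Complex.hasSum_ofReal.2 (hasSum_inv_sinh ht)
    simpa only [Complex.ofReal_mul, Complex.ofReal_ofNat] using this
  have h := hasSum_mellin (p := fun k : ℕ => 2 * k + 1) (fun k => Or.inr (by positivity))
    (by linarith) hF hsum
  have hterm (k : ℕ) : Complex.Gamma s * 2 / ((2 * k + 1 : ℝ) : ℂ) ^ s =
      2 * Complex.Gamma s * (1 / (2 * k + 1 : ℂ) ^ s) := by
    push_cast
    ring
  rw [← h.tsum_eq, tsum_congr hterm, tsum_mul_left, tsum_one_div_two_mul_add_one_cpow hs]
  ring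

theorem integral_pow_div_sinh_general (n : ℕ) :
    ((∫ x : ℝ, x ^ n / Real.sinh x : ℝ) : ℂ) =
      (1 - (-1 : ℂ) ^ n) * (2 ^ (n + 1) - 1) / 2 ^ n * (Nat.factorial n) * riemannZeta ((n : ℂ) + 1) := by
  rcases Nat.even_or_odd n with hn | hn
  · have hodd : Function.Odd fun x : ℝ => x ^ n / sinh x := fun x => by
      simp only [hn.neg_pow, sinh_neg, div_neg]
    rw [hodd.integral_eq_zero, hn.neg_one_pow]
    simp
  · have heven : Function.Even fun x : ℝ => x ^ n / sinh x := fun x => by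
      simp only [hn.neg_pow, sinh_neg, neg_div_neg_eq]
    have h := mellin_inv_sinh (s := n + 1) (by simpa using hn.pos)
    rw [mellin_ofReal_natCast_add_one, Complex.Gamma_nat_eq_factorial, Complex.cpow_neg,
      show (n : ℂ) + 1 = ((n + 1 : ℕ) : ℂ) by push_cast; ring, Complex.cpow_natCast] at h
    simp_rw [heven.integral_eq_two_mul_integral_Ioi, div_eq_mul_inv]
    push_cast at h ⊢
    rw [h, hn.neg_one_pow]
    field_simp
    ring

/-- For `n ≥ 1`, `∫ x^n / sinh x dx = (1-(-1)^n)(2^{n+1}-1)/2^n · n! · ζ(n+1)`. -/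
theorem integral_pow_div_sinh (n : ℕ) (hn : 1 ≤ n) :
    ((∫ x : ℝ, x ^ n / Real.sinh x : ℝ) : ℂ) =
      (1 - (-1 : ℂ) ^ n) * (2 ^ (n + 1) - 1) / 2 ^ n * (Nat.factorial n) * riemannZeta ((n : ℂ) + 1) :=
  integral_pow_div_sinh_general n
end

section
/- For all real x and all n ≥ 1, the Turán determinant T(φ̂_n, x) = φ̂_n(x)² - φ̂_{n-1}(x) φ̂_{n+1}(x) is nonnegative, where φ̂_n are the monic reduced Mittag-Leffler polynomials. -/
/-- Turán's inequality for the monic reduced Mittag-Leffler polynomials: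
`φ̂_n(x)² - φ̂_{n-1}(x) φ̂_{n+1}(x) ≥ 0`. -/
theorem monicReducedMittagLeffler_turan (f : ℕ → ℝ → ℝ)
    (h0 : ∀ x : ℝ, f 0 x = 1) (h1 : ∀ x : ℝ, f 1 x = x)
    (hrec : ∀ n : ℕ, 1 ≤ n → ∀ x : ℝ,
      f (n + 1) x = x * f n x - ((n : ℝ) * ((n : ℝ) + 1) / 4) * f (n - 1) x) :
    ∀ n : ℕ, 1 ≤ n → ∀ x : ℝ, 0 ≤ f n x ^ 2 - f (n - 1) x * f (n + 1) x := by
  intro n hn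
  induction n, hn using Nat.le_induction with
  | base =>
    intro x
    have e2 := hrec 1 le_rfl x
    simp [h0, h1] at e2 ⊢
    nlinarith [e2]
  | succ n hn ih =>
    obtain ⟨m, rfl⟩ : ∃ m, n = m + 1 := ⟨n - 1, (Nat.succ_pred_eq_of_pos hn).symm⟩
    intro x
    have ih' := ih x
    have e1 := hrec (m + 2) (by omega) x
    have e2 := hrec (m + 1) (by omega) x
    simp only [show m + 2 - 1 = m + 1 from rfl, show m + 1 - 1 = m from rfl,
      show m + 1 + 1 - 1 = m + 1 from rfl, show m + 1 + 1 = m + 2 from rfl,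
      show m + 2 + 1 = m + 3 from rfl] at *
    push_cast at e1 e2
    have key : f (m + 2) x ^ 2 - f (m + 1) x * f (m + 3) x
        = (((m : ℝ) + 2) * ((m : ℝ) + 3) / 4 - ((m : ℝ) + 1) * ((m : ℝ) + 2) / 4)
            * f (m + 1) x ^ 2
          + ((m : ℝ) + 1) * ((m : ℝ) + 2) / 4
            * (f (m + 1) x ^ 2 - f m x * f (m + 2) x) := by
      linear_combination (-(f (m + 1) x)) * e1 + (f (m + 2) x) * e2
    rw [key]
    have h1' : (0:ℝ) ≤ (((m : ℝ) + 2) * ((m : ℝ) + 3) / 4 - ((m : ℝ) + 1) * ((m : ℝ) + 2) / 4)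
        * f (m + 1) x ^ 2 := by
      apply mul_nonneg _ (sq_nonneg _)
      nlinarith [Nat.cast_nonneg (α := ℝ) m]
    have h2' : (0:ℝ) ≤ ((m : ℝ) + 1) * ((m : ℝ) + 2) / 4
        * (f (m + 1) x ^ 2 - f m x * f (m + 2) x) := by
      apply mul_nonneg _ ih'
      positivity
    linarith
end

section
/- With c_n = n(n+1)/4, the Turán determinants of the monic reduced Mittag-Leffler polynomials satisfy the identity T(φ̂_{n+1}, x) - c_n T(φ̂_n, x) = ((n+1)/2) φ̂_n(x)² for all n ≥ 1 and all real x, where T(φ̂_n, x) = φ̂_n(x)² - φ̂_{n-1}(x) φ̂_{n+1}(x). -/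
/-- With `c_n = n(n+1)/4`, the Turán determinants satisfy
`T(φ̂_{n+1},x) - c_n T(φ̂_n,x) = ((n+1)/2) φ̂_n(x)²`. -/
theorem monicReducedMittagLeffler_turan_identity (f : ℕ → ℝ → ℝ)
    (h0 : ∀ x : ℝ, f 0 x = 1) (h1 : ∀ x : ℝ, f 1 x = x)
    (hrec : ∀ n : ℕ, 1 ≤ n → ∀ x : ℝ,
      f (n + 1) x = x * f n x - ((n : ℝ) * ((n : ℝ) + 1) / 4) * f (n - 1) x) :
    ∀ n : ℕ, 1 ≤ n → ∀ x : ℝ,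
      (f (n + 1) x ^ 2 - f n x * f (n + 2) x)
        - ((n : ℝ) * ((n : ℝ) + 1) / 4) * (f n x ^ 2 - f (n - 1) x * f (n + 1) x)
        = (((n : ℝ) + 1) / 2) * f n x ^ 2 := by
  intro n hn x
  have hA := hrec n hn x
  have hB := hrec (n + 1) (by omega) x
  simp only [Nat.add_sub_cancel] at hB
  push_cast at hB
  rw [hB, hA]
  ring
end

section
/- The functions Φ_n(s) = i^n (n+1)! √(2/π) · sinh^{2n+2}(s/2)/sinh^{n+2}(s) satisfy the recurrence Φ_{n+1}(s) = -i Φ_n'(s) - (n(n+1)/4) Φ_{n-1}(s) for all n ≥ 1 and all real s ≠ 0. -/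
/-- `Φ_n(s) = i^n (n+1)! √(2/π) sinh^{2n+2}(s/2)/sinh^{n+2} s`. -/
noncomputable def Phi (n : ℕ) (s : ℝ) : ℂ :=
  Complex.I ^ n * ((Nat.factorial (n + 1)) : ℝ) * (Real.sqrt (2 / Real.pi) : ℂ) *
    ((Real.sinh (s / 2) : ℂ)) ^ (2 * n + 2) / ((Real.sinh s : ℂ)) ^ (n + 2)

/-!
Writing `t = tanh (s/2)`, one has `sinh s = 2 sinh (s/2) cosh (s/2)` and `1 - t² = cosh⁻² (s/2)`,
so away from `s = 0` the function `Φ_n` is `c_n tⁿ (1 - t²)` with `c_n = iⁿ (n+1)! √(2/π) / 2^{n+2}`.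
Since `dt/ds = (1 - t²)/2` and `c_{n+1} = i (n+2)/2 · c_n`, the recurrence becomes a polynomial
identity in `t`.
-/

open Real

theorem Real.hasDerivAt_tanh (x : ℝ) : HasDerivAt tanh (1 - tanh x ^ 2) x := by
  have hc : cosh x ≠ 0 := (cosh_pos x).ne'
  have h := (hasDerivAt_sinh x).div (hasDerivAt_cosh x) hc
  rw [show (sinh / cosh : ℝ → ℝ) = tanh from funext fun y => (tanh_eq_sinh_div_cosh y).symm] at h
  refine h.congr_deriv ?_
  rw [tanh_eq_sinh_div_cosh]
  field_simp

theorem Real.sinh_pow_div_sinh_two_mul_pow {y : ℝ} (hy : y ≠ 0) (n : ℕ) :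
    sinh y ^ (2 * n + 2) / sinh (2 * y) ^ (n + 2) = tanh y ^ n * (1 - tanh y ^ 2) / 2 ^ (n + 2) := by
  have ha : sinh y ≠ 0 := sinh_ne_zero.mpr hy
  have hc : cosh y ≠ 0 := (cosh_pos y).ne'
  rw [tanh_eq_sinh_div_cosh, sinh_two_mul, div_pow, div_pow]
  field_simp
  linear_combination (-(2 ^ (n + 2) * sinh y ^ (2 * n + 2) * cosh y ^ (n + 2))) * cosh_sq y

noncomputable def PhiCoeff (n : ℕ) : ℂ :=
  Complex.I ^ n * (n + 1).factorial * √(2 / π) / 2 ^ (n + 2)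

theorem PhiCoeff_succ (n : ℕ) : PhiCoeff (n + 1) = Complex.I * ((n : ℂ) + 2) / 2 * PhiCoeff n := by
  simp only [PhiCoeff, Nat.factorial_succ (n + 1)]
  push_cast
  ring

theorem neg_I_mul_PhiCoeff_succ (n : ℕ) :
    -Complex.I * PhiCoeff (n + 1) = ((n : ℂ) + 2) / 2 * PhiCoeff n := by
  rw [PhiCoeff_succ]
  linear_combination (-((n : ℂ) + 2) / 2 * PhiCoeff n) * Complex.I_sq

theorem PhiCoeff_add_two (n : ℕ) :
    PhiCoeff (n + 2) = -(((n : ℂ) + 2) * ((n : ℂ) + 3) / 4) * PhiCoeff n := by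
  rw [PhiCoeff_succ, PhiCoeff_succ]
  push_cast
  linear_combination (((n : ℂ) + 3) * ((n : ℂ) + 2) / 4 * PhiCoeff n) * Complex.I_sq

theorem Phi_eq_of_ne_zero {s : ℝ} (hs : s ≠ 0) (n : ℕ) :
    Phi n s = PhiCoeff n * ((tanh (s / 2) ^ n * (1 - tanh (s / 2) ^ 2) : ℝ) : ℂ) := by
  have h := sinh_pow_div_sinh_two_mul_pow (div_ne_zero hs two_ne_zero) n
  rw [mul_div_cancel₀ s two_ne_zero] at h
  rw [Phi, mul_div_assoc, ← Complex.ofReal_pow, ← Complex.ofReal_pow, ← Complex.ofReal_div, h,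
    PhiCoeff]
  generalize tanh (s / 2) = t
  push_cast
  ring

theorem hasDerivAt_tanh_half_pow_mul_one_sub_sq (n : ℕ) (s : ℝ) :
    HasDerivAt (fun x => tanh (x / 2) ^ n * (1 - tanh (x / 2) ^ 2))
      ((n * tanh (s / 2) ^ (n - 1) * (1 - tanh (s / 2) ^ 2) - 2 * tanh (s / 2) ^ (n + 1)) *
        (1 - tanh (s / 2) ^ 2) / 2) s := by
  have hhalf : HasDerivAt (fun x : ℝ => x / 2) (1 / 2) s := (hasDerivAt_id s).div_const 2
  have ht : HasDerivAt (fun x => tanh (x / 2)) ((1 - tanh (s / 2) ^ 2) / 2) s := by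
    have h := (hasDerivAt_tanh (s / 2)).comp s hhalf
    rwa [mul_one_div] at h
  refine ((ht.fun_pow n).mul ((ht.fun_pow 2).const_sub 1)).congr_deriv ?_
  push_cast
  ring

theorem hasDerivAt_Phi {s : ℝ} (hs : s ≠ 0) (n : ℕ) :
    HasDerivAt (Phi n) (PhiCoeff n *
      (((n * tanh (s / 2) ^ (n - 1) * (1 - tanh (s / 2) ^ 2) - 2 * tanh (s / 2) ^ (n + 1)) *
        (1 - tanh (s / 2) ^ 2) / 2 : ℝ) : ℂ)) s :=
  ((hasDerivAt_tanh_half_pow_mul_one_sub_sq n s).ofReal_comp.const_mul _).congr_of_eventuallyEq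
    ((eventually_ne_nhds hs).mono fun _ hx => Phi_eq_of_ne_zero hx n)

/-- The functions `Φ_n` satisfy `Φ_{n+1}(s) = -i Φ_n'(s) - (n(n+1)/4) Φ_{n-1}(s)`. -/
theorem Phi_recurrence (n : ℕ) (hn : 1 ≤ n) (s : ℝ) (hs : s ≠ 0) :
    Phi (n + 1) s = -Complex.I * deriv (Phi n) s
      - ((n : ℂ) * ((n : ℂ) + 1) / 4) * Phi (n - 1) s := by
  obtain ⟨m, rfl⟩ := Nat.exists_eq_add_of_le' hn
  rw [(hasDerivAt_Phi hs _).deriv, Phi_eq_of_ne_zero hs, Phi_eq_of_ne_zero hs, Nat.add_sub_cancel,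
    ← mul_assoc, neg_I_mul_PhiCoeff_succ, PhiCoeff_add_two]
  generalize tanh (s / 2) = t
  push_cast
  ring
end

section
/- The monic reduced Mittag-Leffler polynomials satisfy Σ_{k=0}^{n} [φ̂_k''(x) φ̂_{n-k}(x) - φ̂_k'(x) φ̂_{n-k}'(x)] / (k!(n-k)!) = 0 for every n ≥ 1 and all real x. -/
/-!
Write `u ⋆ v` for the binomial convolution `n ↦ ∑ C(n,k) u k v (n - k)`, the product of
exponential generating functions. The shift `u ↦ u (· + 1)` is a derivation for `⋆`, and for
weights `c j = j (α j + β)` the lowering `L u = c · u (· - 1)` satisfies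
`u ⋆ L v + L u ⋆ v = d · (u ⋆ v) (· - 1)` with `d n = n (α (n + 1) + 2 β)`. For `P = φ̂`,
`G = φ̂'`, `H = φ̂''`, which obey the differentiated three-term recurrences, these two rules give
`W = H ⋆ P - G ⋆ G` the recurrence `W (n + 1) = 2 x W n - d n W (n - 1)`. As `W 0 = 0` and
`d 0 = 0`, `W` vanishes identically; dividing by `n!` turns `C(n,k)` into `1 / (k! (n - k)!)`.
-/

open Polynomial Finset

section BinomialConvolution

variable {A : Type*} [CommRing A]

def binomConv : (ℕ → A) →ₗ[A] (ℕ → A) →ₗ[A] ℕ → A :=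
  LinearMap.mk₂ A (fun u v n => ∑ k ∈ range (n + 1), (n.choose k : A) * (u k * v (n - k)))
    (fun _ _ _ => funext fun _ => by
      simp only [Pi.add_apply, ← sum_add_distrib]; exact sum_congr rfl fun _ _ => by ring)
    (fun _ _ _ => funext fun _ => by
      simp only [Pi.smul_apply, smul_eq_mul, mul_sum]; exact sum_congr rfl fun _ _ => by ring)
    (fun _ _ _ => funext fun _ => by
      simp only [Pi.add_apply, ← sum_add_distrib]; exact sum_congr rfl fun _ _ => by ring)
    (fun _ _ _ => funext fun _ => by
      simp only [Pi.smul_apply, smul_eq_mul, mul_sum]; exact sum_congr rfl fun _ _ => by ring)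

theorem binomConv_apply (u v : ℕ → A) (n : ℕ) :
    binomConv u v n = ∑ k ∈ range (n + 1), (n.choose k : A) * (u k * v (n - k)) := rfl

theorem binomConv_comm (u v : ℕ → A) : binomConv u v = binomConv v u := by
  ext n
  rw [binomConv_apply, binomConv_apply, ← sum_range_reflect]
  refine sum_congr rfl fun k hk => ?_
  have hkn : k ≤ n := Nat.lt_succ_iff.mp (mem_range.mp hk)
  rw [add_tsub_cancel_right, Nat.choose_symm hkn, Nat.sub_sub_self hkn, mul_comm (u _)]

theorem binomConv_succ (u v : ℕ → A) (n : ℕ) :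
    binomConv u v (n + 1) =
      binomConv u (fun j => v (j + 1)) n + binomConv (fun j => u (j + 1)) v n := by
  rw [binomConv_apply, sum_choose_succ_mul (fun i j => u i * v j)]
  congr 1
  refine sum_congr rfl fun k hk => ?_
  rw [Nat.sub_add_comm (Nat.lt_succ_iff.mp (mem_range.mp hk))]

theorem choose_mul_quadratic_add_choose_mul_quadratic (α β : A) {n k : ℕ} (hk : k ≤ n) :
    ((n + 1).choose k : A) * ((n + 1 - k : ℕ) * (α * (n + 1 - k : ℕ) + β))
      + ((n + 1).choose (k + 1) : A) * ((k + 1 : ℕ) * (α * (k + 1 : ℕ) + β))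
      = (n + 1 : ℕ) * (α * ((n + 1 : ℕ) + 1) + 2 * β) * n.choose k := by
  have hhigh : (n + 1).choose (k + 1) * (k + 1) = (n + 1) * n.choose k :=
    (Nat.add_one_mul_choose_eq n k).symm
  have hlow : (n + 1).choose k * (n + 1 - k) = (n + 1) * n.choose k :=
    (Nat.choose_succ_right_eq (n + 1) k).symm.trans hhigh
  have hsub : ((n + 1 - k : ℕ) : A) = n + 1 - k := by
    push_cast [Nat.cast_sub (by omega : k ≤ n + 1)]; ring
  have hlow' : ((n + 1).choose k : A) * (n + 1 - k : ℕ) = (n + 1) * n.choose k := by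
    rw [← Nat.cast_mul, hlow]; push_cast; ring
  have hhigh' : ((n + 1).choose (k + 1) : A) * (k + 1 : ℕ) = (n + 1) * n.choose k := by
    rw [← Nat.cast_mul, hhigh]; push_cast; ring
  rw [hsub] at hlow' ⊢
  push_cast at hhigh' ⊢
  linear_combination (α * (n + 1 - k) + β) * hlow' + (α * (k + 1) + β) * hhigh'

theorem binomConv_weight_add_weight_binomConv (α β : A) {c : ℕ → A}
    (hc : ∀ j, c j = j * (α * j + β)) (u v : ℕ → A) (n : ℕ) :
    binomConv u (fun j => c j * v (j - 1)) n + binomConv (fun j => c j * u (j - 1)) v n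
      = n * (α * (n + 1) + 2 * β) * binomConv u v (n - 1) := by
  have hc0 : c 0 = 0 := by simp [hc]
  cases n with
  | zero => simp [binomConv_apply, hc0]
  | succ n =>
    have hdrop_last : binomConv u (fun j => c j * v (j - 1)) (n + 1)
        = ∑ k ∈ range (n + 1), ((n + 1).choose k : A) * (u k * (c (n + 1 - k) * v (n - k))) := by
      rw [binomConv_apply, sum_range_succ, Nat.sub_self, hc0, zero_mul, mul_zero, mul_zero,
        add_zero]
      refine sum_congr rfl fun k _ => ?_
      rw [Nat.sub_right_comm, add_tsub_cancel_right]
    have hdrop_first : binomConv (fun j => c j * u (j - 1)) v (n + 1)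
        = ∑ k ∈ range (n + 1), ((n + 1).choose (k + 1) : A) * (c (k + 1) * u k * v (n - k)) := by
      rw [binomConv_apply, sum_range_succ', hc0]
      simp only [zero_mul, mul_zero, add_zero, add_tsub_cancel_right, Nat.add_sub_add_right]
    rw [hdrop_last, hdrop_first, ← sum_add_distrib, add_tsub_cancel_right, binomConv_apply, mul_sum]
    refine sum_congr rfl fun k hk => ?_
    rw [hc, hc]
    linear_combination (u k * v (n - k)) *
      choose_mul_quadratic_add_choose_mul_quadratic α β (Nat.lt_succ_iff.mp (mem_range.mp hk))

theorem binomConv_eq_of_three_term_recurrences (x α β : A) {c : ℕ → A}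
    (hc : ∀ j, c j = j * (α * j + β)) {P G H : ℕ → A}
    (hP : ∀ n, P (n + 1) = x * P n - c n * P (n - 1))
    (hG : ∀ n, G (n + 1) = P n + x * G n - c n * G (n - 1))
    (hH : ∀ n, H (n + 1) = 2 * G n + x * H n - c n * H (n - 1))
    (hG0 : G 0 = 0) (hH0 : H 0 = 0) (n : ℕ) :
    binomConv H P n = binomConv G G n := by
  set W := binomConv H P - binomConv G G with hW
  have hrec : ∀ m, W (m + 1) = 2 * x * W m - m * (α * (m + 1) + 2 * β) * W (m - 1) := by
    intro m
    have hP' : (fun j => P (j + 1)) = x • P - fun j => c j * P (j - 1) := funext hP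
    have hG' : (fun j => G (j + 1)) = P + x • G - fun j => c j * G (j - 1) := funext hG
    have hH' : (fun j => H (j + 1)) = (2 : A) • G + x • H - fun j => c j * H (j - 1) :=
      funext hH
    simp only [hW, Pi.sub_apply, binomConv_succ, hP', hG', hH', map_add, map_sub, map_smul,
      LinearMap.add_apply, LinearMap.sub_apply, LinearMap.smul_apply, Pi.add_apply,
      Pi.smul_apply, smul_eq_mul]
    linear_combination binomConv_weight_add_weight_binomConv α β hc G G m
      - binomConv_weight_add_weight_binomConv α β hc H P m
      + congrFun (binomConv_comm G P) m
  have hW0 : W 0 = 0 := by simp [hW, binomConv_apply, hG0, hH0]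
  suffices ∀ m, W m = 0 ∧ W (m + 1) = 0 from sub_eq_zero.mp (this n).1
  intro m
  induction m with
  | zero => exact ⟨hW0, by simp [hrec 0, hW0]⟩
  | succ m ih => exact ⟨ih.2, by simp [hrec (m + 1), ih.1, ih.2]⟩

theorem binomConv_derivative_derivative_eq (α β : A) {w : ℕ → A}
    (hw : ∀ j, w j = j * (α * j + β)) {f : ℕ → A[X]}
    (hf : ∀ n, f (n + 1) = X * f n - C (w n) * f (n - 1)) (hf0 : derivative (f 0) = 0)
    (n : ℕ) :
    binomConv (fun k => derivative (derivative (f k))) f n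
      = binomConv (fun k => derivative (f k)) (fun k => derivative (f k)) n := by
  have hf' : ∀ n, derivative (f (n + 1))
      = f n + X * derivative (f n) - C (w n) * derivative (f (n - 1)) := fun n => by
    rw [hf n]; simp only [derivative_sub, derivative_mul, derivative_X, derivative_C]; ring
  have hf'' : ∀ n, derivative (derivative (f (n + 1)))
      = 2 * derivative (f n) + X * derivative (derivative (f n))
        - C (w n) * derivative (derivative (f (n - 1))) := fun n => by
    rw [hf' n]; simp only [derivative_add, derivative_sub, derivative_mul, derivative_X,
      derivative_C]; ring
  refine binomConv_eq_of_three_term_recurrences X (C α) (C β) (fun j => ?_) hf hf' hf'' hf0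
    (by rw [hf0, derivative_zero]) n
  simp [hw]

end BinomialConvolution

theorem sum_div_factorial_mul_factorial {K : Type*} [Field K] [CharZero K] (a : ℕ → K) (n : ℕ) :
    ∑ k ∈ range (n + 1), a k / (k.factorial * (n - k).factorial)
      = (∑ k ∈ range (n + 1), (n.choose k : K) * a k) / n.factorial := by
  rw [sum_div]
  refine sum_congr rfl fun k hk => ?_
  have : (n.factorial : K) ≠ 0 := Nat.cast_ne_zero.mpr n.factorial_ne_zero
  rw [Nat.cast_choose K (Nat.lt_succ_iff.mp (mem_range.mp hk))]
  field_simp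

/-- The recurrence-differential relation
`Σ_{k=0}^n [φ̂_k'' φ̂_{n-k} - φ̂_k' φ̂_{n-k}'] / (k!(n-k)!) = 0`. -/
theorem monicReducedMittagLeffler_convolution (f : ℕ → Polynomial ℝ)
    (h0 : f 0 = 1) (h1 : f 1 = X)
    (hrec : ∀ n : ℕ, 1 ≤ n →
      f (n + 1) = X * f n - C ((n : ℝ) * ((n : ℝ) + 1) / 4) * f (n - 1)) :
    ∀ n : ℕ, 1 ≤ n → ∀ x : ℝ,
      ∑ k ∈ Finset.range (n + 1),
        ((derivative (derivative (f k))).eval x * (f (n - k)).eval x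
          - (derivative (f k)).eval x * (derivative (f (n - k))).eval x)
          / ((Nat.factorial k) * (Nat.factorial (n - k))) = 0 := by
  intro n _ x
  have hrec' : ∀ m : ℕ, f (m + 1) = X * f m - C ((m : ℝ) * ((m : ℝ) + 1) / 4) * f (m - 1)
    | 0 => by simp [h0, h1]
    | m + 1 => hrec (m + 1) m.succ_pos
  have hconv := congrArg (eval x) <|
    binomConv_derivative_derivative_eq (1 / 4) (1 / 4) (fun j => by ring) hrec'
      (by rw [h0, derivative_one]) n
  simp only [binomConv_apply, eval_finsetSum, eval_mul, eval_natCast] at hconv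
  rw [sum_div_factorial_mul_factorial, sum_congr rfl fun k _ => mul_sub _ _ _, sum_sub_distrib,
    hconv, sub_self, zero_div]
end

section
/- Each monic reduced Mittag-Leffler polynomial φ̂_n satisfies the n-th order differential equation Σ_{k=1}^{n} (cos(kπ/2) + x sin(kπ/2)) φ̂_n^{(k)}(x)/k! - n φ̂_n(x) = 0 for all real x. -/
open Polynomial

namespace MittagLefflerAux

open Complex

theorem Ipow (k : ℕ) :
    (I : ℂ) ^ k = Real.cos (k * Real.pi / 2) + Real.sin (k * Real.pi / 2) * I := by
  have h : (I : ℂ) = Complex.exp ((Real.pi / 2 : ℝ) * I) := by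
    rw [Complex.exp_mul_I, ← ofReal_cos, ← ofReal_sin]
    norm_num [Real.cos_pi_div_two, Real.sin_pi_div_two]
  conv_lhs => rw [h]
  rw [← Complex.exp_nat_mul,
    show (k : ℂ) * (((Real.pi / 2 : ℝ)) * I) = ((k * Real.pi / 2 : ℝ) : ℂ) * I by
      push_cast; ring,
    Complex.exp_mul_I, ← ofReal_cos, ← ofReal_sin]

theorem taylorC (p : ℂ[X]) (N : ℕ) (h : p.natDegree ≤ N) (z w : ℂ) :
    p.eval (z + w)
      = ∑ k ∈ Finset.range (N + 1),
          (derivative^[k] p).eval z * w ^ k / (Nat.factorial k) := by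
  rw [show z + w = w + z by ring, ← taylor_eval,
    eval_eq_sum_range' (n := N + 1) (by rwa [natDegree_taylor, Nat.lt_succ_iff])]
  refine Finset.sum_congr rfl fun k _ => ?_
  rw [taylor_coeff, ← factorial_smul_hasseDeriv]
  have hk : ((k.factorial : ℂ)) ≠ 0 := Nat.cast_ne_zero.mpr k.factorial_ne_zero
  rw [eq_div_iff hk]
  simp only [Module.End.mul_apply, Module.End.natCast_apply, eval_smul, nsmul_eq_mul,
    eval_mul, eval_natCast]
  ring

/-- The key pair of functional equations for the complexified polynomials. -/
def P (g : ℕ → ℂ[X]) (n : ℕ) : Prop :=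
  (∀ z : ℂ, (1 - I * z) * (g n).eval (z + I) + (1 + I * z) * (g n).eval (z - I)
      = 2 * ((n : ℂ) + 1) * (g n).eval z) ∧
  (∀ z : ℂ, (z + I) * (g n).eval (z + I) + (z - I) * (g n).eval (z - I)
      = 2 * (g (n + 1)).eval z - ((n : ℂ) * ((n : ℂ) + 1) / 2) * (g (n - 1)).eval z)

theorem P_all (g : ℕ → ℂ[X]) (hg0 : g 0 = 1) (hg1 : g 1 = X)
    (hgrec : ∀ m : ℕ, 1 ≤ m →
      g (m + 1) = X * g m - C ((m : ℂ) * ((m : ℂ) + 1) / 4) * g (m - 1)) :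
    ∀ n : ℕ, P g n := by
  have hx : ∀ (m : ℕ) (w : ℂ),
      w * (g m).eval w
        = (g (m + 1)).eval w + ((m : ℂ) * ((m : ℂ) + 1) / 4) * (g (m - 1)).eval w := by
    intro m w
    cases m with
    | zero => simp [hg0, hg1]
    | succ m =>
        rw [hgrec (m + 1) (Nat.succ_le_succ (Nat.zero_le m))]
        simp only [Nat.add_sub_cancel, eval_sub, eval_mul, eval_C, eval_X]
        push_cast
        ring
  have g2 : g 2 = X * g 1 - C ((1 : ℂ) * ((1 : ℂ) + 1) / 4) * g 0 := by
    have := hgrec 1 le_rfl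
    norm_num at this ⊢
    convert this using 3 <;> norm_num
  have key : ∀ n : ℕ, P g n ∧ P g (n + 1) := by
    intro n
    induction n with
    | zero =>
        refine ⟨⟨fun z => ?_, fun z => ?_⟩, fun z => ?_, fun z => ?_⟩
        · simp only [hg0, eval_one, Nat.cast_zero]
          ring
        · simp only [hg0, hg1, eval_one, eval_X, Nat.cast_zero]
          ring
        · simp only [hg1, eval_X, Nat.cast_one]
          linear_combination (norm := (ring_nf; simp only [Complex.I_sq]; ring)) (0 : ℂ)
        · simp only [hg1, g2, hg0, eval_sub, eval_mul, eval_C, eval_X, eval_one, Nat.cast_one]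
          linear_combination (norm := (ring_nf; simp only [Complex.I_sq]; ring)) (0 : ℂ)
    | succ n ih =>
        refine ⟨ih.2, fun z => ?_, fun z => ?_⟩
        · -- L (n+2)
          have hr : g (n + 2) = X * g (n + 1) - C (((n : ℂ) + 1) * (((n : ℂ) + 1) + 1) / 4) * g n := by
            have := hgrec (n + 1) (Nat.succ_le_succ (Nat.zero_le n))
            simpa [Nat.add_sub_cancel] using this
          have hLn := ih.1.1 z
          have hLn1 := ih.2.1 z
          have hMn1 := ih.2.2 z
          simp only [Nat.add_sub_cancel] at hMn1
          simp only [hr, eval_sub, eval_mul, eval_C, eval_X] at hMn1 ⊢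
          push_cast at hLn hLn1 hMn1 ⊢
          linear_combination (norm := (ring_nf; simp only [Complex.I_sq]; ring))
            z * hLn1 + hMn1 - (((n : ℂ) + 1) * ((n : ℂ) + 2) / 4) * hLn
        · -- M (n+2)
          have hr : g (n + 2) = X * g (n + 1) - C (((n : ℂ) + 1) * (((n : ℂ) + 1) + 1) / 4) * g n := by
            have := hgrec (n + 1) (Nat.succ_le_succ (Nat.zero_le n))
            simpa [Nat.add_sub_cancel] using this
          have hr3 : g (n + 3) = X * g (n + 2) - C (((n : ℂ) + 2) * (((n : ℂ) + 2) + 1) / 4) * g (n + 1) := by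
            have := hgrec (n + 2) (by omega)
            simpa [Nat.add_sub_cancel] using this
          have hLn1 := ih.2.1 z
          have hMn := ih.1.2 z
          have hMn1 := ih.2.2 z
          have hxz := hx n z
          simp only [Nat.add_sub_cancel] at hMn1 ⊢
          simp only [hr3, hr, eval_sub, eval_mul, eval_C, eval_X] at hMn1 ⊢
          push_cast at hLn1 hMn hMn1 hxz ⊢
          linear_combination (norm := (ring_nf; simp only [Complex.I_sq]; ring))
            z * hMn1 - hLn1 - (((n : ℂ) + 1) * ((n : ℂ) + 2) / 4) * hMn
              - (((n : ℂ) + 1) * ((n : ℂ) + 2) / 2) * hxz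
  exact fun n => (key n).1

open Complex in
theorem term_eq (x d : ℝ) (k : ℕ) :
    (1 - I * (x:ℂ)) * ((d:ℂ) * I ^ k / (Nat.factorial k))
      + (1 + I * (x:ℂ)) * ((d:ℂ) * (-I) ^ k / (Nat.factorial k))
    = 2 * ((((Real.cos (k * Real.pi / 2) + x * Real.sin (k * Real.pi / 2)) * d
        / (Nat.factorial k) : ℝ)) : ℂ) := by
  have h2 : (-I : ℂ) ^ k
      = (Real.cos (k * Real.pi / 2) : ℂ) - (Real.sin (k * Real.pi / 2) : ℂ) * I := by
    have : (-I : ℂ) ^ k = (starRingEnd ℂ) (I ^ k) := by rw [map_pow, conj_I]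
    rw [this, Ipow k]
    simp only [map_add, map_mul, conj_ofReal, conj_I]
    ring
  rw [Ipow k, h2]
  push_cast
  linear_combination (norm := (ring_nf; simp only [Complex.I_sq]; ring)) (0 : ℂ)

end MittagLefflerAux

/-- Each monic reduced Mittag-Leffler polynomial satisfies the `n`-th order ODE
`Σ_{k=1}^n (cos(kπ/2) + x sin(kπ/2)) φ̂_n^{(k)}(x)/k! - n φ̂_n(x) = 0`. -/
theorem monicReducedMittagLeffler_ode (f : ℕ → Polynomial ℝ)
    (h0 : f 0 = 1) (h1 : f 1 = X)
    (hrec : ∀ n : ℕ, 1 ≤ n →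
      f (n + 1) = X * f n - C ((n : ℝ) * ((n : ℝ) + 1) / 4) * f (n - 1)) :
    ∀ n : ℕ, ∀ x : ℝ,
      ∑ k ∈ Finset.Icc 1 n,
        (Real.cos ((k : ℝ) * Real.pi / 2) + x * Real.sin ((k : ℝ) * Real.pi / 2)) *
          ((derivative^[k] (f n)).eval x) / (Nat.factorial k)
        - (n : ℝ) * (f n).eval x = 0 := by
  intro n x
  open Complex MittagLefflerAux in
  -- degree bound
  have hdeg2 : ∀ m : ℕ, (f m).natDegree ≤ m ∧ (f (m + 1)).natDegree ≤ m + 1 := by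
    intro m
    induction m with
    | zero => exact ⟨by simp [h0], by simp [h1]⟩
    | succ m ih =>
        refine ⟨ih.2, ?_⟩
        rw [hrec (m + 1) (Nat.succ_le_succ (Nat.zero_le m))]
        refine le_trans (natDegree_sub_le _ _) (max_le ?_ ?_)
        · refine le_trans natDegree_mul_le ?_
          have hX := natDegree_X_le (R := ℝ)
          have h2 := ih.2
          omega
        · refine le_trans natDegree_mul_le ?_
          simp only [natDegree_C, Nat.add_sub_cancel, zero_add]
          exact le_trans ih.1 (by omega)
  set g : ℕ → ℂ[X] := fun m => (f m).map (algebraMap ℝ ℂ) with hgdef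
  have hg0 : g 0 = 1 := by simp [hgdef, h0]
  have hg1 : g 1 = X := by simp [hgdef, h1]
  have hgrec : ∀ m : ℕ, 1 ≤ m →
      g (m + 1) = X * g m - C ((m : ℂ) * ((m : ℂ) + 1) / 4) * g (m - 1) := by
    intro m hm
    simp only [hgdef, hrec m hm, Polynomial.map_sub, Polynomial.map_mul, map_X, map_C]
    congr 2
    rw [Complex.coe_algebraMap]
    push_cast
    ring
  have hevmap : ∀ (p : ℝ[X]) (y : ℝ),
      (p.map (algebraMap ℝ ℂ)).eval (y : ℂ) = ((p.eval y : ℝ) : ℂ) := by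
    intro p y
    rw [eval_map]
    exact eval₂_at_apply _ y
  have hdmap : ∀ (k : ℕ) (p : ℝ[X]),
      derivative^[k] (p.map (algebraMap ℝ ℂ)) = (derivative^[k] p).map (algebraMap ℝ ℂ) := by
    intro k
    induction k with
    | zero => intro p; rfl
    | succ k ih =>
        intro p
        rw [Function.iterate_succ_apply, Function.iterate_succ_apply, derivative_map, ih]
  have hdegC : (g n).natDegree ≤ n := le_trans natDegree_map_le (hdeg2 n).1
  set d : ℕ → ℝ := fun k => (derivative^[k] (f n)).eval x with hddef
  have hp : (g n).eval ((x : ℂ) + I)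
      = ∑ k ∈ Finset.range (n + 1), ((d k : ℂ) * I ^ k / (Nat.factorial k)) := by
    rw [taylorC _ n hdegC]
    exact Finset.sum_congr rfl fun k _ => by rw [hdmap, hevmap]
  have hm : (g n).eval ((x : ℂ) - I)
      = ∑ k ∈ Finset.range (n + 1), ((d k : ℂ) * (-I) ^ k / (Nat.factorial k)) := by
    rw [sub_eq_add_neg, taylorC _ n hdegC]
    exact Finset.sum_congr rfl fun k _ => by rw [hdmap, hevmap]
  have hL := (P_all g hg0 hg1 hgrec n).1 (x : ℂ)
  rw [hp, hm, Finset.mul_sum, Finset.mul_sum, ← Finset.sum_add_distrib] at hL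
  have hL2 : (2 : ℂ) * ∑ k ∈ Finset.range (n + 1),
      ((((Real.cos (k * Real.pi / 2) + x * Real.sin (k * Real.pi / 2)) * d k
        / (Nat.factorial k) : ℝ)) : ℂ)
      = 2 * (((n : ℂ) + 1) * ((f n).eval x : ℝ)) := by
    rw [Finset.mul_sum]
    rw [show ∀ a : ℂ, (2:ℂ) * (((n : ℂ) + 1) * a) = 2 * ((n:ℂ)+1) * a from fun a => by ring]
    rw [← hevmap (f n) x, ← hL]
    exact Finset.sum_congr rfl fun k _ => (term_eq x (d k) k).symm
  have hL3 : ∑ k ∈ Finset.range (n + 1),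
      ((Real.cos (k * Real.pi / 2) + x * Real.sin (k * Real.pi / 2)) * d k
        / (Nat.factorial k))
      = ((n : ℝ) + 1) * (f n).eval x := by
    have := mul_left_cancel₀ (two_ne_zero (α := ℂ)) hL2
    exact_mod_cast this
  have h00 : ((0:ℕ) : ℝ) * Real.pi / 2 = 0 := by norm_num
  have ht0 : (Real.cos ((0:ℕ) * Real.pi / 2) + x * Real.sin ((0:ℕ) * Real.pi / 2)) * d 0
        / (Nat.factorial 0) = (f n).eval x := by
    rw [h00]
    simp [hddef]
  rw [Finset.sum_range_succ'] at hL3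
  rw [← Finset.Ico_add_one_right_eq_Icc, Finset.sum_Ico_eq_sum_range]
  simp only [Nat.add_sub_cancel, Nat.succ_sub_one]
  have hre : ∑ i ∈ Finset.range n,
      (Real.cos ((1 + i : ℕ) * Real.pi / 2) + x * Real.sin ((1 + i : ℕ) * Real.pi / 2)) *
        ((derivative^[1 + i] (f n)).eval x) / (Nat.factorial (1 + i))
      = ∑ i ∈ Finset.range n,
      (Real.cos ((i + 1 : ℕ) * Real.pi / 2) + x * Real.sin ((i + 1 : ℕ) * Real.pi / 2)) *
        (d (i + 1)) / (Nat.factorial (i + 1)) := by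
    refine Finset.sum_congr rfl fun i _ => by rw [add_comm 1 i]
  rw [hre]
  rw [ht0] at hL3
  linarith [hL3]
end

section
/- For every n ≥ 0, the derivative of φ̂_{n+1} satisfies φ̂'_{n+1}(x) = Σ_{k=0}^{⌊n/2⌋} (-1)^k C(n+1, 2k+1) ((2k)!/2^{2k}) φ̂_{n-2k}(x), where C denotes a binomial coefficient. -/
open Polynomial Finset

/-!
Differentiating the recurrence gives `φ̂'_{n+2} = φ̂_{n+1} + x φ̂'_{n+1} - a_{n+1} φ̂'_n` with
`a_m = m(m+1)/4`, so by two-step induction it suffices that the right-hand sides `S_n` satisfy the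
same recurrence. Rewriting `x φ̂_m = φ̂_{m+1} + a_m φ̂_{m-1}` inside `x S_{n+1}` and comparing the
coefficients of `φ̂_{n-2k}`, this reduces to a three-term identity for the coefficients, which is
Pascal's rule combined with the two absorption identities for binomial coefficients.
-/

theorem cast_choose_succ_mul_sub {R : Type*} [CommRing R] (n k : ℕ) :
    ((n + 1).choose k : R) * ((n : R) + 1 - k) = (n + 1) * n.choose k := by
  rcases le_or_gt k (n + 1) with hk | hk
  · have h := congrArg (Nat.cast : ℕ → R) (Nat.choose_mul_succ_eq n k)
    push_cast [Nat.cast_sub hk] at h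
    linear_combination -h
  · rw [Nat.choose_eq_zero_of_lt hk, Nat.choose_eq_zero_of_lt (by omega)]
    simp

noncomputable def mlCoeff (n k : ℕ) : ℝ :=
  (-1 : ℝ) ^ k * (Nat.choose (n + 1) (2 * k + 1)) * (Nat.factorial (2 * k)) / 2 ^ (2 * k)

theorem mlCoeff_zero (n : ℕ) : mlCoeff n 0 = n + 1 := by
  simp [mlCoeff]

theorem mlCoeff_eq_zero {n k : ℕ} (hk : n / 2 < k) : mlCoeff n k = 0 := by
  simp [mlCoeff, Nat.choose_eq_zero_of_lt (show n + 1 < 2 * k + 1 by omega)]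

theorem mlCoeff_add_two_succ (n k : ℕ) :
    mlCoeff (n + 2) (k + 1) = mlCoeff (n + 1) (k + 1)
      + mlCoeff (n + 1) k * (((n : ℝ) + 1 - 2 * k) * ((n : ℝ) + 2 - 2 * k) / 4)
      - ((n : ℝ) + 2) * ((n : ℝ) + 3) / 4 * mlCoeff n k := by
  have pascal : ((n + 3).choose (2 * k + 3) : ℝ)
      = (n + 2).choose (2 * k + 2) + (n + 2).choose (2 * k + 3) := by
    exact_mod_cast Nat.choose_succ_succ (n + 2) (2 * k + 2)
  have absorb : ((n + 2).choose (2 * k + 2) : ℝ) * (2 * k + 2)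
      = (n + 2) * (n + 1).choose (2 * k + 1) := by
    exact_mod_cast (Nat.add_one_mul_choose_eq (n + 1) (2 * k + 1)).symm
  have absorb' := cast_choose_succ_mul_sub (R := ℝ) (n + 1) (2 * k + 1)
  have fact : ((2 * k + 2).factorial : ℝ) = (2 * k + 2) * (2 * k + 1) * (2 * k).factorial := by
    push_cast [Nat.factorial_succ]; ring
  simp only [mlCoeff, show 2 * (k + 1) = 2 * k + 2 by ring, show 2 * k + 2 + 1 = 2 * k + 3 by ring,
    fact]
  push_cast at absorb' ⊢
  rw [pascal, pow_succ, pow_succ]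
  linear_combination (-(-1 : ℝ) ^ k * (2 * k).factorial / 2 ^ (2 * k) / 4) *
    ((2 * k + 1) * absorb + ((n : ℝ) + 2 - 2 * k) * absorb')

theorem sum_range_mlCoeff_smul {M : Type*} [AddCommMonoid M] [Module ℝ M] (g : ℕ → M)
    {n L : ℕ} (hL : n / 2 + 1 ≤ L) :
    ∑ k ∈ range L, mlCoeff n k • g k = ∑ k ∈ range (n / 2 + 1), mlCoeff n k • g k := by
  refine (sum_subset (range_subset_range.2 hL) fun k _ hk => ?_).symm
  rw [mlCoeff_eq_zero (by simpa using hk), zero_smul]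

noncomputable def mlSum (f : ℕ → ℝ[X]) (n : ℕ) : ℝ[X] :=
  ∑ k ∈ range (n / 2 + 1), mlCoeff n k • f (n - 2 * k)

section Recurrence

variable {f : ℕ → ℝ[X]}

theorem X_mul_eq_of_rec (h0 : f 0 = 1) (h1 : f 1 = X)
    (hrec : ∀ n : ℕ, 1 ≤ n →
      f (n + 1) = X * f n - C ((n : ℝ) * ((n : ℝ) + 1) / 4) * f (n - 1)) (m : ℕ) :
    X * f m = f (m + 1) + C ((m : ℝ) * (m + 1) / 4) * f (m - 1) := by
  rcases m with _ | m
  · simp [h0, h1]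
  · rw [hrec (m + 1) (by omega), Nat.add_sub_cancel, sub_add_cancel]

theorem derivative_add_two_of_rec
    (hrec : ∀ n : ℕ, 1 ≤ n →
      f (n + 1) = X * f n - C ((n : ℝ) * ((n : ℝ) + 1) / 4) * f (n - 1)) (n : ℕ) :
    derivative (f (n + 2)) = f (n + 1) + X * derivative (f (n + 1))
      - C (((n : ℝ) + 1) * ((n : ℝ) + 2) / 4) * derivative (f n) := by
  rw [hrec (n + 1) (by omega)]
  simp only [derivative_sub, derivative_mul, derivative_X, derivative_C, Nat.add_sub_cancel]
  push_cast
  ring_nf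

theorem mlCoeff_smul_X_mul
    (hX : ∀ m, X * f m = f (m + 1) + C ((m : ℝ) * (m + 1) / 4) * f (m - 1)) (n k : ℕ) :
    mlCoeff (n + 1) k • (X * f (n + 1 - 2 * k)) = mlCoeff (n + 1) k • f (n + 2 - 2 * k)
      + mlCoeff (n + 1) k •
          ((((n : ℝ) + 1 - 2 * k) * ((n : ℝ) + 2 - 2 * k) / 4) • f (n - 2 * k)) := by
  rcases le_or_gt (2 * k) (n + 1) with hk | hk
  · have hm : ((n + 1 - 2 * k : ℕ) : ℝ) = (n : ℝ) + 1 - 2 * k := by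
      push_cast [Nat.cast_sub hk]; ring
    rw [hX, hm, show n + 1 - 2 * k + 1 = n + 2 - 2 * k by omega,
      show n + 1 - 2 * k - 1 = n - 2 * k by omega, smul_add, smul_eq_C_mul (a := _ / 4)]
    ring_nf
  · -- the index `n + 1 - 2 * k` is truncated, but its coefficient vanishes
    simp [mlCoeff_eq_zero (show (n + 1) / 2 < k by omega)]

theorem mlSum_add_two
    (hX : ∀ m, X * f m = f (m + 1) + C ((m : ℝ) * (m + 1) / 4) * f (m - 1)) (n : ℕ) :
    mlSum f (n + 2) = f (n + 2) + X * mlSum f (n + 1)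
      - C (((n : ℝ) + 2) * ((n : ℝ) + 3) / 4) * mlSum f n := by
  have hXsum : X * mlSum f (n + 1) = ∑ k ∈ range (n + 3), mlCoeff (n + 1) k • f (n + 2 - 2 * k)
      + ∑ k ∈ range (n + 2), mlCoeff (n + 1) k •
          ((((n : ℝ) + 1 - 2 * k) * ((n : ℝ) + 2 - 2 * k) / 4) • f (n - 2 * k)) := by
    simp only [mlSum, mul_sum, mul_smul_comm, mlCoeff_smul_X_mul hX, sum_add_distrib]
    rw [sum_range_mlCoeff_smul _ (by omega : (n + 1) / 2 + 1 ≤ n + 3),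
      sum_range_mlCoeff_smul _ (by omega : (n + 1) / 2 + 1 ≤ n + 2)]
  have hCsum : C (((n : ℝ) + 2) * ((n : ℝ) + 3) / 4) * mlSum f n = ∑ k ∈ range (n + 2),
      mlCoeff n k • ((((n : ℝ) + 2) * ((n : ℝ) + 3) / 4) • f (n - 2 * k)) := by
    rw [mlSum, mul_sum, sum_range_mlCoeff_smul (n := n) _ (by omega)]
    refine sum_congr rfl fun k _ => ?_
    rw [smul_comm, ← smul_eq_C_mul]
  have hterm (k : ℕ) : mlCoeff (n + 2) (k + 1) • f (n + 2 - 2 * (k + 1))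
      = mlCoeff (n + 1) (k + 1) • f (n + 2 - 2 * (k + 1))
        + mlCoeff (n + 1) k • ((((n : ℝ) + 1 - 2 * k) * ((n : ℝ) + 2 - 2 * k) / 4) • f (n - 2 * k))
        - mlCoeff n k • ((((n : ℝ) + 2) * ((n : ℝ) + 3) / 4) • f (n - 2 * k)) := by
    rw [show n + 2 - 2 * (k + 1) = n - 2 * k by omega, smul_smul, smul_smul, ← add_smul,
      ← sub_smul, mlCoeff_add_two_succ]
    congr 1
    ring
  rw [hXsum, hCsum, mlSum, ← sum_range_mlCoeff_smul (L := n + 3) _ (by omega), sum_range_succ',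
    sum_range_succ' (fun k => mlCoeff (n + 1) k • _), sum_congr rfl fun k _ => hterm k,
    sum_sub_distrib, sum_add_distrib, mlCoeff_zero, mlCoeff_zero]
  push_cast
  module

end Recurrence

/-- `φ̂'_{n+1}(x) = Σ_{k=0}^{⌊n/2⌋} (-1)^k C(n+1,2k+1) (2k)!/2^{2k} φ̂_{n-2k}(x)`. -/
theorem monicReducedMittagLeffler_deriv (f : ℕ → Polynomial ℝ)
    (h0 : f 0 = 1) (h1 : f 1 = X)
    (hrec : ∀ n : ℕ, 1 ≤ n →
      f (n + 1) = X * f n - C ((n : ℝ) * ((n : ℝ) + 1) / 4) * f (n - 1)) :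
    ∀ n : ℕ,
      derivative (f (n + 1)) =
        ∑ k ∈ Finset.range (n / 2 + 1),
          (((-1 : ℝ) ^ k * (Nat.choose (n + 1) (2 * k + 1)) * (Nat.factorial (2 * k)) / 2 ^ (2 * k))) •
            f (n - 2 * k) := by
  have hX := X_mul_eq_of_rec h0 h1 hrec
  suffices h : ∀ n, derivative (f (n + 1)) = mlSum f n from h
  intro n
  induction n using Nat.twoStepInduction with
  | zero => simp [mlSum, mlCoeff_zero, h0, h1]
  | one =>
    rw [hrec 1 le_rfl]
    simp [mlSum, mlCoeff_zero, h0, h1, one_add_one_eq_two, two_smul]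
  | more n ih0 ih1 =>
    rw [derivative_add_two_of_rec hrec, ih0, ih1, mlSum_add_two hX]
    push_cast
    ring_nf
end
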